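/- Let $p\ge2$ and let $u,v$ be positive differentiable functions on a domain $\Omega\subset\mathbb{R}^N$. Then pointwise in $\Omega$, $|\nabla u|^{p-2}\nabla u\cdot\nabla\big(u-\tfrac{v^p}{u^p}u\big)+|\nabla v|^{p-2}\nabla v\cdot\nabla\big(v-\tfrac{u^p}{v^p}v\big)\ \ge\ C_p\,(u^p+v^p)\,|\nabla\log u-\nabla\log v|^p$, where $C_p=\frac{1}{2^{p-1}-1}$. -/

import Mathlib

/-!
Write `∇u = u • a` and `∇v = v • b`, so that `a` and `b` are the gradients of `log u` and `log v`.
Expanding the gradients, the left-hand side becomes `u ^ p * D b a + v ^ p * D a b`, where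
`D b a = ‖a‖ ^ p - ‖b‖ ^ p - p * ‖b‖ ^ (p - 2) * ⟪b, a - b⟫` is the Bregman divergence of `‖·‖ ^ p`.
It therefore suffices to show `D b a ≥ C_p * ‖a - b‖ ^ p`. Clarkson's inequality gives
`D b (b + 2 • h) ≥ 2 * D b (b + h) + 2 * ‖h‖ ^ p`, so every admissible constant `c` can be improved to
`2 ^ (1 - p) * (c + 1)`. Starting from `c = 0` (convexity of `‖·‖ ^ p`), the iterates increase to the
fixed point `1 / (2 ^ (p - 1) - 1)`.
-/

open scoped RealInnerProductSpace

namespace Real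

lemma rpow_sub_two_mul_sq {p x : ℝ} (hx : 0 ≤ x) (hp : p ≠ 0) : x ^ (p - 2) * x ^ 2 = x ^ p := by
  rw [← rpow_natCast, ← rpow_add' hx (by norm_num [hp])]
  norm_num

lemma mul_mul_rpow_sub_one_le {p a b : ℝ} (hp : 1 < p) (ha : 0 ≤ a) (hb : 0 ≤ b) :
    p * (a * b ^ (p - 1)) ≤ a ^ p + (p - 1) * b ^ p := by
  have hp0 : 0 < p := by linarith
  have hw : 1 / p + (p - 1) / p = 1 := by field_simp; ring
  have h := geom_mean_le_arith_mean2_weighted (by positivity) (by bound) (rpow_nonneg ha p)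
    (rpow_nonneg hb p) hw
  rw [← rpow_mul ha, ← rpow_mul hb, mul_one_div_cancel hp0.ne', rpow_one,
    mul_div_cancel₀ _ hp0.ne'] at h
  calc p * (a * b ^ (p - 1)) ≤ p * (1 / p * a ^ p + (p - 1) / p * b ^ p) := by gcongr
    _ = a ^ p + (p - 1) * b ^ p := by field_simp

lemma rpow_add_le_mul_rpow_add_rpow {p a b : ℝ} (ha : 0 ≤ a) (hb : 0 ≤ b) (hp : 1 ≤ p) :
    (a + b) ^ p ≤ 2 ^ (p - 1) * (a ^ p + b ^ p) := by
  lift a to NNReal using ha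
  lift b to NNReal using hb
  exact_mod_cast NNReal.rpow_add_le_mul_rpow_add_rpow a b hp

lemma two_rpow_one_sub_mul_add_one {p : ℝ} (hp : 1 < p) :
    (2 : ℝ) ^ (1 - p) * (1 / (2 ^ (p - 1) - 1) + 1) = 1 / (2 ^ (p - 1) - 1) := by
  have hpos : 0 < (2 : ℝ) ^ (p - 1) - 1 := by
    rw [sub_pos]; exact one_lt_rpow one_lt_two (by linarith)
  rw [show 1 - p = -(p - 1) by ring, rpow_neg zero_le_two]
  field_simp
  ring

end Real

section InnerProductSpace

variable {E : Type*} [NormedAddCommGroup E] [InnerProductSpace ℝ E] {p : ℝ}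

lemma norm_two_smul_rpow (p : ℝ) (v : E) : ‖(2 : ℝ) • v‖ ^ p = 2 ^ p * ‖v‖ ^ p := by
  rw [norm_smul, Real.mul_rpow (norm_nonneg _) (norm_nonneg _), Real.norm_two]

lemma norm_add_rpow_add_norm_sub_rpow_le (hp : 2 ≤ p) (x y : E) :
    ‖x + y‖ ^ p + ‖x - y‖ ^ p ≤ 2 ^ (p - 1) * (‖x‖ ^ p + ‖y‖ ^ p) := by
  have hq : 1 ≤ p / 2 := by linarith
  have sq_rpow : ∀ s : ℝ, 0 ≤ s → (s ^ 2) ^ (p / 2) = s ^ p := fun s hs => by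
    rw [← Real.rpow_natCast, ← Real.rpow_mul hs]; ring_nf
  calc ‖x + y‖ ^ p + ‖x - y‖ ^ p
      = (‖x + y‖ ^ 2) ^ (p / 2) + (‖x - y‖ ^ 2) ^ (p / 2) := by
        rw [sq_rpow _ (norm_nonneg _), sq_rpow _ (norm_nonneg _)]
    _ ≤ (‖x + y‖ ^ 2 + ‖x - y‖ ^ 2) ^ (p / 2) :=
        Real.add_rpow_le_rpow_add (sq_nonneg _) (sq_nonneg _) hq
    _ = 2 ^ (p / 2) * (‖x‖ ^ 2 + ‖y‖ ^ 2) ^ (p / 2) := by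
        rw [parallelogram_law_with_norm ℝ, Real.mul_rpow zero_le_two (by positivity)]
    _ ≤ 2 ^ (p / 2) * (2 ^ (p / 2 - 1) * ((‖x‖ ^ 2) ^ (p / 2) + (‖y‖ ^ 2) ^ (p / 2))) := by
        gcongr
        exact Real.rpow_add_le_mul_rpow_add_rpow (sq_nonneg _) (sq_nonneg _) hq
    _ = 2 ^ (p - 1) * (‖x‖ ^ p + ‖y‖ ^ p) := by
        rw [sq_rpow _ (norm_nonneg _), sq_rpow _ (norm_nonneg _), ← mul_assoc,
          ← Real.rpow_add two_pos]
        ring_nf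

noncomputable def normRpowBregman (p : ℝ) (b a : E) : ℝ :=
  ‖a‖ ^ p + (p - 1) * ‖b‖ ^ p - p * ‖b‖ ^ (p - 2) * ⟪b, a⟫

lemma normRpowBregman_nonneg (hp : 1 < p) (b a : E) : 0 ≤ normRpowBregman p b a := by
  have hb : ‖b‖ ^ (p - 2) * ‖b‖ = ‖b‖ ^ (p - 1) := by
    rw [← Real.rpow_add_one' (norm_nonneg b) (by linarith)]; ring_nf
  rw [normRpowBregman, sub_nonneg]
  calc p * ‖b‖ ^ (p - 2) * ⟪b, a⟫ ≤ p * ‖b‖ ^ (p - 2) * (‖b‖ * ‖a‖) := by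
        gcongr; exact real_inner_le_norm b a
    _ = p * (‖a‖ * ‖b‖ ^ (p - 1)) := by rw [← hb]; ring
    _ ≤ ‖a‖ ^ p + (p - 1) * ‖b‖ ^ p :=
        Real.mul_mul_rpow_sub_one_le hp (norm_nonneg a) (norm_nonneg b)

lemma two_mul_normRpowBregman_add_le (hp : 2 ≤ p) (b h : E) :
    2 * normRpowBregman p b (b + h) + 2 * ‖h‖ ^ p ≤ normRpowBregman p b (b + (2 : ℝ) • h) := by
  have h2 : (2 : ℝ) ^ p = 2 ^ (p - 1) * 2 := by
    rw [← Real.rpow_add_one two_ne_zero]; ring_nf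
  have hclarkson := norm_add_rpow_add_norm_sub_rpow_le hp (b + (2 : ℝ) • h) b
  rw [show b + (2 : ℝ) • h + b = (2 : ℝ) • (b + h) by module, add_sub_cancel_left,
    norm_two_smul_rpow, norm_two_smul_rpow, ← mul_add, h2, mul_assoc,
    mul_le_mul_iff_right₀ (by positivity)] at hclarkson
  have hb : ‖b‖ ^ (p - 2) * ⟪b, b⟫ = ‖b‖ ^ p := by
    rw [real_inner_self_eq_norm_sq, Real.rpow_sub_two_mul_sq (norm_nonneg b) (by linarith)]
  simp only [normRpowBregman, inner_add_right, real_inner_smul_right]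
  linear_combination hclarkson - p * hb

lemma normRpowBregman_add_ge_step (hp : 2 ≤ p) {c : ℝ}
    (hc : ∀ b h : E, c * ‖h‖ ^ p ≤ normRpowBregman p b (b + h)) (b h : E) :
    2 ^ (1 - p) * (c + 1) * ‖h‖ ^ p ≤ normRpowBregman p b (b + h) := by
  obtain ⟨k, rfl⟩ : ∃ k : E, h = (2 : ℝ) • k := ⟨(2 : ℝ)⁻¹ • h, by module⟩
  have h2 : (2 : ℝ) ^ (1 - p) * 2 ^ p = 2 := by
    rw [← Real.rpow_add two_pos]; norm_num
  calc 2 ^ (1 - p) * (c + 1) * ‖(2 : ℝ) • k‖ ^ p = 2 * (c * ‖k‖ ^ p) + 2 * ‖k‖ ^ p := by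
        rw [norm_two_smul_rpow]; linear_combination (c + 1) * ‖k‖ ^ p * h2
    _ ≤ 2 * normRpowBregman p b (b + k) + 2 * ‖k‖ ^ p := by gcongr; exact hc b k
    _ ≤ normRpowBregman p b (b + (2 : ℝ) • k) := two_mul_normRpowBregman_add_le hp b k

lemma normRpowBregman_add_ge_partial (hp : 2 ≤ p) (n : ℕ) (b h : E) :
    1 / (2 ^ (p - 1) - 1) * (1 - (2 ^ (1 - p)) ^ n) * ‖h‖ ^ p ≤ normRpowBregman p b (b + h) := by
  induction n generalizing b h with
  | zero => simpa using normRpowBregman_nonneg (by linarith) b (b + h)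
  | succ n ih =>
    convert normRpowBregman_add_ge_step hp ih b h using 2
    rw [pow_succ]
    linear_combination -Real.two_rpow_one_sub_mul_add_one (by linarith : 1 < p)

lemma normRpowBregman_ge (hp : 2 ≤ p) (b a : E) :
    1 / (2 ^ (p - 1) - 1) * ‖a - b‖ ^ p ≤ normRpowBregman p b a := by
  have hr : (2 : ℝ) ^ (1 - p) < 1 := Real.rpow_lt_one_of_one_lt_of_neg one_lt_two (by linarith)
  have hlim := ((tendsto_pow_atTop_nhds_zero_of_lt_one (by positivity) hr).const_sub 1).const_mul
    (1 / ((2 : ℝ) ^ (p - 1) - 1)) |>.mul_const (‖a - b‖ ^ p)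
  simpa using le_of_tendsto' hlim fun n => by
    simpa using normRpowBregman_add_ge_partial hp n b (a - b)

lemma norm_smul_rpow_sub_two_mul_inner_eq (hp : p ≠ 0) {s t : ℝ} (hs : 0 < s) (ht : 0 < t)
    (a b : E) :
    ‖s • a‖ ^ (p - 2) *
        ⟪s • a, (1 + (p - 1) * (t / s) ^ p) • (s • a) - (p * (t / s) ^ (p - 1)) • (t • b)⟫ =
      s ^ p * ‖a‖ ^ p + t ^ p * ((p - 1) * ‖a‖ ^ p - p * ‖a‖ ^ (p - 2) * ⟪a, b⟫) := by
  simp only [inner_sub_right, real_inner_smul_right, real_inner_smul_left,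
    real_inner_self_eq_norm_sq, norm_smul, Real.norm_of_nonneg hs.le]
  rw [Real.mul_rpow hs.le (norm_nonneg a), Real.div_rpow ht.le hs.le, Real.div_rpow ht.le hs.le,
    ← Real.rpow_sub_two_mul_sq (norm_nonneg a) hp, Real.rpow_sub hs, Real.rpow_two,
    Real.rpow_sub_one ht.ne', Real.rpow_sub_one hs.ne']
  field_simp
  ring

lemma gradient_sub_rpow_div_rpow_mul [CompleteSpace E] {u v : E → ℝ} {x : E}
    (hu : DifferentiableAt ℝ u x) (hv : DifferentiableAt ℝ v x) (hux : 0 < u x) (hvx : 0 < v x)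
    (p : ℝ) :
    gradient (fun y => u y - (v y ^ p / u y ^ p) * u y) x =
      (1 + (p - 1) * (v x / u x) ^ p) • gradient u x -
        (p * (v x / u x) ^ (p - 1)) • gradient v x := by
  have heq : (fun y => u y - (v y ^ p / u y ^ p) * u y) =ᶠ[nhds x]
      fun y => u y - v y ^ p * u y ^ (1 - p) := by
    filter_upwards [hu.continuousAt.eventually (lt_mem_nhds hux)] with y hy
    rw [Real.rpow_sub hy, Real.rpow_one]
    ring
  have hderiv := (hu.hasFDerivAt.sub ((hv.hasFDerivAt.rpow_const (Or.inl hvx.ne')).mul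
    (hu.hasFDerivAt.rpow_const (Or.inl hux.ne')))).congr_of_eventuallyEq heq
  apply (InnerProductSpace.toDual ℝ E).injective
  rw [toDual_gradient, hderiv.fderiv, map_sub, map_smul, map_smul, toDual_gradient,
    toDual_gradient, Real.div_rpow hvx.le hux.le, Real.div_rpow hvx.le hux.le,
    show 1 - p - 1 = -p by ring, Real.rpow_neg hux.le, Real.rpow_sub hux, Real.rpow_one,
    Real.rpow_sub_one hvx.ne', Real.rpow_sub_one hux.ne']
  match_scalars <;> field_simp
  ring

end InnerProductSpace

theorem pointwise_lemma_p_ge_two (N : ℕ) (p : ℝ) (hp : 2 ≤ p)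
    (Ω : Set (EuclideanSpace ℝ (Fin N)))
    (u v : EuclideanSpace ℝ (Fin N) → ℝ)
    (hu : ∀ x ∈ Ω, DifferentiableAt ℝ u x) (hv : ∀ x ∈ Ω, DifferentiableAt ℝ v x)
    (hupos : ∀ x ∈ Ω, 0 < u x) (hvpos : ∀ x ∈ Ω, 0 < v x)
    (x : EuclideanSpace ℝ (Fin N)) (hx : x ∈ Ω) :
    ‖gradient u x‖ ^ (p - 2) *
        ⟪gradient u x, gradient (fun y => u y - (v y ^ p / u y ^ p) * u y) x⟫ +
      ‖gradient v x‖ ^ (p - 2) *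
        ⟪gradient v x, gradient (fun y => v y - (u y ^ p / v y ^ p) * v y) x⟫ ≥
      (1 / (2 ^ (p - 1) - 1)) * (u x ^ p + v x ^ p) *
        ‖(u x)⁻¹ • gradient u x - (v x)⁻¹ • gradient v x‖ ^ p := by
  have hu0 := hupos x hx
  have hv0 := hvpos x hx
  rw [gradient_sub_rpow_div_rpow_mul (hu x hx) (hv x hx) hu0 hv0,
    gradient_sub_rpow_div_rpow_mul (hv x hx) (hu x hx) hv0 hu0]
  set a := (u x)⁻¹ • gradient u x
  set b := (v x)⁻¹ • gradient v x
  rw [show gradient u x = u x • a from (smul_inv_smul₀ hu0.ne' _).symm,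
    show gradient v x = v x • b from (smul_inv_smul₀ hv0.ne' _).symm,
    norm_smul_rpow_sub_two_mul_inner_eq (by linarith) hu0 hv0,
    norm_smul_rpow_sub_two_mul_inner_eq (by linarith) hv0 hu0]
  have hba := mul_le_mul_of_nonneg_left (normRpowBregman_ge hp b a) (Real.rpow_nonneg hu0.le p)
  have hab := mul_le_mul_of_nonneg_left (normRpowBregman_ge hp a b) (Real.rpow_nonneg hv0.le p)
  rw [norm_sub_rev] at hab
  simp only [normRpowBregman] at hba hab
  linear_combination hba + hab
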